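/- arXiv:1812.04371 — 4 statements merged into one kernel-verified Lean document; each statement's English description precedes it below -/
import Mathlib

section
/- With the hypotheses of the previous setup (σ(a) - W*π(a)W compact, π(a)(WW* - 1) compact, [F, σ(a)] compact for all a ∈ A), the commutator [WFW*, π(a)] is compact for every a ∈ A. -/
/-!
Modulo compact operators, `W` intertwines `σ` with `π`: from `σ(a) ≡ W*π(a)W` and
`π(a)WW* ≡ π(a)` (hence, taking adjoints, `WW*π(a) ≡ π(a)`) one gets `Wσ(a) ≡ π(a)W` and
`σ(a)W* ≡ W*π(a)`. Then `WFW*π(a) ≡ WFσ(a)W* ≡ Wσ(a)FW* ≡ π(a)WFW*`.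
The adjoint step uses that `T` is compact as soon as `T*T` is, via `‖Tx‖² ≤ ‖T*Tx‖‖x‖`.
-/

open Metric Set ContinuousLinearMap
open scoped InnerProduct

theorem TotallyBounded.image_of_forall_dist_lt {X α β : Type*} [PseudoMetricSpace α]
    [PseudoMetricSpace β] {f : X → α} {g : X → β} {s : Set X} (hf : TotallyBounded (f '' s))
    (hfg : ∀ ε > 0, ∃ δ > 0, ∀ x ∈ s, ∀ y ∈ s, dist (f x) (f y) < δ → dist (g x) (g y) < ε) :
    TotallyBounded (g '' s) := by
  refine Metric.totallyBounded_iff.2 fun ε hε => ?_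
  obtain ⟨δ, hδ, hδε⟩ := hfg ε hε
  obtain ⟨u, hus, huf, hcov⟩ :=
    exists_subset_image_finite_and.1 (finite_approx_of_totallyBounded hf δ hδ)
  rw [biUnion_image] at hcov
  refine ⟨g '' u, huf.image g, ?_⟩
  rw [biUnion_image]
  rintro _ ⟨z, hz, rfl⟩
  obtain ⟨w, hw, hzw⟩ := mem_iUnion₂.1 (hcov (mem_image_of_mem f hz))
  exact mem_iUnion₂.2 ⟨w, hw, hδε z hz w (hus hw) hzw⟩

section CompactIdeal

variable {𝕜 E : Type*} [NontriviallyNormedField 𝕜] [NormedAddCommGroup E] [NormedSpace 𝕜 E]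

variable (𝕜 E) in
def compactOperatorIdeal : TwoSidedIdeal (E →L[𝕜] E) :=
  .mk' {T | IsCompactOperator T} isCompactOperator_zero .add .neg
    (fun h => h.clm_comp _) (fun h => h.comp_clm _)

theorem mem_compactOperatorIdeal {T : E →L[𝕜] E} :
    T ∈ compactOperatorIdeal 𝕜 E ↔ IsCompactOperator T :=
  TwoSidedIdeal.mem_mk' ..

end CompactIdeal

section Hilbert

variable {𝕜 E F : Type*} [RCLike 𝕜] [NormedAddCommGroup E] [InnerProductSpace 𝕜 E]
  [NormedAddCommGroup F] [InnerProductSpace 𝕜 F] [CompleteSpace E] [CompleteSpace F]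

theorem ContinuousLinearMap.norm_apply_sq_le_norm_adjoint_comp_self_apply_mul_norm
    (T : E →L[𝕜] F) (x : E) : ‖T x‖ ^ 2 ≤ ‖(T† ∘L T) x‖ * ‖x‖ := by
  rw [T.apply_norm_sq_eq_inner_adjoint_left]
  exact (RCLike.re_le_norm _).trans (norm_inner_le_norm _ _)

theorem IsCompactOperator.of_adjoint_comp_self {T : E →L[𝕜] F}
    (h : IsCompactOperator (T† ∘L T)) : IsCompactOperator T := by
  refine (isCompactOperator_iff_isCompact_closure_image_closedBall (T : E →ₗ[𝕜] F) one_pos).2 ?_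
  have hS : TotallyBounded ((T† ∘L T) '' closedBall 0 1) :=
    (h.isCompact_closure_image_closedBall 1).totallyBounded.subset subset_closure
  refine (hS.image_of_forall_dist_lt fun ε hε => ⟨ε ^ 2 / 2, by positivity,
    fun x hx y hy hxy => ?_⟩).closure.isCompact_of_isClosed isClosed_closure
  rw [dist_eq_norm, ← map_sub] at hxy ⊢
  have hxy₂ : ‖x - y‖ ≤ 2 := by
    rw [mem_closedBall_zero_iff] at hx hy
    linarith [norm_sub_le x y]
  refine lt_of_pow_lt_pow_left₀ 2 hε.le ?_
  calc ‖T (x - y)‖ ^ 2 ≤ ‖(T† ∘L T) (x - y)‖ * ‖x - y‖ :=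
        T.norm_apply_sq_le_norm_adjoint_comp_self_apply_mul_norm _
    _ ≤ ‖(T† ∘L T) (x - y)‖ * 2 := by gcongr
    _ < ε ^ 2 / 2 * 2 := by gcongr
    _ = ε ^ 2 := by ring

theorem IsCompactOperator.adjoint {T : E →L[𝕜] F} (h : IsCompactOperator T) :
    IsCompactOperator (T†) :=
  .of_adjoint_comp_self (by rw [adjoint_adjoint]; exact h.comp_clm _)

theorem star_mem_compactOperatorIdeal {T : E →L[𝕜] E} (h : T ∈ compactOperatorIdeal 𝕜 E) :
    star T ∈ compactOperatorIdeal 𝕜 E := by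
  rw [mem_compactOperatorIdeal, star_eq_adjoint] at *
  exact h.adjoint

end Hilbert

theorem commutator_conjugated_operator_compact_general
    {H : Type*} [NormedAddCommGroup H] [InnerProductSpace ℂ H] [CompleteSpace H]
    {A : Type*} [NormedRing A] [StarRing A] [NormedAlgebra ℂ A]
    (π σ : A →⋆ₐ[ℂ] (H →L[ℂ] H))
    (W : H →L[ℂ] H)
    (h₁ : ∀ a : A, IsCompactOperator ⇑(σ a - star W * π a * W))
    (h₂ : ∀ a : A, IsCompactOperator ⇑(π a * (W * star W - 1)))
    (F : H →L[ℂ] H)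
    (h₃ : ∀ a : A, IsCompactOperator ⇑(F * σ a - σ a * F)) :
    ∀ a : A, IsCompactOperator
      ⇑((W * F * star W) * π a - π a * (W * F * star W)) := by
  intro a
  set K := compactOperatorIdeal ℂ H
  have hK₁ : σ a - star W * π a * W ∈ K := mem_compactOperatorIdeal.2 (h₁ a)
  have hK₂ : π a * (W * star W - 1) ∈ K := mem_compactOperatorIdeal.2 (h₂ a)
  have hK₃ : F * σ a - σ a * F ∈ K := mem_compactOperatorIdeal.2 (h₃ a)
  have hK₄ : (W * star W - 1) * π a ∈ K := by
    simpa [star_mul, star_sub, map_star] using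
      star_mem_compactOperatorIdeal (mem_compactOperatorIdeal.2 (h₂ (star a)))
  have key : W * F * star W * π a - π a * (W * F * star W) =
      W * (σ a - star W * π a * W) * F * star W - W * F * (σ a - star W * π a * W) * star W
        + W * (F * σ a - σ a * F) * star W - W * F * star W * (π a * (W * star W - 1))
        + (W * star W - 1) * π a * W * F * star W := by
    noncomm_ring
  rw [← mem_compactOperatorIdeal, key]
  refine add_mem (sub_mem (add_mem (sub_mem ?_ ?_) ?_) ?_) ?_
  · exact K.mul_mem_right _ _ (K.mul_mem_right _ _ (K.mul_mem_left _ _ hK₁))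
  · exact K.mul_mem_right _ _ (K.mul_mem_left _ _ hK₁)
  · exact K.mul_mem_right _ _ (K.mul_mem_left _ _ hK₃)
  · exact K.mul_mem_left _ _ hK₂
  · exact K.mul_mem_right _ _ (K.mul_mem_right _ _ (K.mul_mem_right _ _ hK₄))

/-- Let `π, σ` be representations of a C*-algebra `A` on a Hilbert space `H`, `W` an
isometry with `σ(a) - W*π(a)W` compact and `π(a)(WW* - 1)` compact for all `a`, and `F`
a bounded operator with `[F, σ(a)]` compact for all `a`. Then the commutator
`[WFW*, π(a)]` is compact for every `a ∈ A`. -/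
theorem commutator_conjugated_operator_compact
    {H : Type*} [NormedAddCommGroup H] [InnerProductSpace ℂ H] [CompleteSpace H]
    {A : Type*} [NormedRing A] [StarRing A] [CStarRing A] [NormedAlgebra ℂ A]
    [StarModule ℂ A] [CompleteSpace A]
    (π σ : A →⋆ₐ[ℂ] (H →L[ℂ] H))
    (W : H →L[ℂ] H) (hW : star W * W = 1)
    (h₁ : ∀ a : A, IsCompactOperator ⇑(σ a - star W * π a * W))
    (h₂ : ∀ a : A, IsCompactOperator ⇑(π a * (W * star W - 1)))
    (F : H →L[ℂ] H)
    (h₃ : ∀ a : A, IsCompactOperator ⇑(F * σ a - σ a * F)) :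
    ∀ a : A, IsCompactOperator
      ⇑((W * F * star W) * π a - π a * (W * F * star W)) :=
  commutator_conjugated_operator_compact_general π σ W h₁ h₂ F h₃
end

section
/- Let W₁, W₂ : H₁ → H₂ be isometries and σ : A → B(H₁), π : A → B(H₂) representations such that Wⱼ*π(a)Wⱼ - σ(a) ∈ K(H₁) for all a ∈ A and j = 1, 2, and [WⱼWⱼ*, π(a)] ∈ K(H₂) for all a. Then [W₁W₂*, π(a)] ∈ K(H₂) for all a ∈ A. -/
open ContinuousLinearMap

/-!
With `Pⱼ = WⱼWⱼ*` and `T = π(a)`, the relations `Wⱼ*Wⱼ = 1` give the exact identity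
`[W₁W₂*, T] = W₁W₂*[P₂, T] + W₁(W₂*TW₂ - W₁*TW₁)W₂* + [P₁, T]W₁W₂*`.
The outer terms are compact by the commutator hypotheses, and the middle one because
`W₂*TW₂ - W₁*TW₁ = (W₂*TW₂ - σ(a)) - (W₁*TW₁ - σ(a))`.
The identity holds with `Wⱼ*` replaced by any left inverse of `Wⱼ`.
-/

section LeftInverse

variable {R E F : Type*} [Ring R]
  [TopologicalSpace E] [AddCommGroup E] [IsTopologicalAddGroup E] [Module R E]
  [TopologicalSpace F] [AddCommGroup F] [IsTopologicalAddGroup F] [Module R F]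
  {W₁ W₂ : E →L[R] F} {V₁ V₂ : F →L[R] E}

theorem comp_mul_sub_mul_comp_eq_of_leftInverse
    (hV₁ : V₁ ∘L W₁ = .id R E) (hV₂ : V₂ ∘L W₂ = .id R E) (T : F →L[R] F) :
    (W₁ ∘L V₂) * T - T * (W₁ ∘L V₂) =
      (W₁ ∘L V₂) ∘L ((W₂ ∘L V₂) * T - T * (W₂ ∘L V₂))
        + W₁ ∘L (V₂ ∘L T ∘L W₂ - V₁ ∘L T ∘L W₁) ∘L V₂
        + ((W₁ ∘L V₁) * T - T * (W₁ ∘L V₁)) ∘L (W₁ ∘L V₂) := by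
  have h₁ : ∀ x, V₁ (W₁ x) = x := fun x => congr($hV₁ x)
  have h₂ : ∀ x, V₂ (W₂ x) = x := fun x => congr($hV₂ x)
  ext x
  simp [h₁, h₂]

theorem isCompactOperator_comp_mul_sub_mul_comp_of_leftInverse
    (hV₁ : V₁ ∘L W₁ = .id R E) (hV₂ : V₂ ∘L W₂ = .id R E) {T : F →L[R] F}
    (hcomm₁ : IsCompactOperator ⇑((W₁ ∘L V₁) * T - T * (W₁ ∘L V₁)))
    (hcomm₂ : IsCompactOperator ⇑((W₂ ∘L V₂) * T - T * (W₂ ∘L V₂)))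
    (hcompr : IsCompactOperator ⇑(V₂ ∘L T ∘L W₂ - V₁ ∘L T ∘L W₁)) :
    IsCompactOperator ⇑((W₁ ∘L V₂) * T - T * (W₁ ∘L V₂)) := by
  rw [comp_mul_sub_mul_comp_eq_of_leftInverse hV₁ hV₂]
  exact ((hcomm₂.clm_comp (W₁ ∘L V₂)).add ((hcompr.clm_comp W₁).comp_clm V₂)).add
    (hcomm₁.comp_clm (W₁ ∘L V₂))

end LeftInverse

theorem mixed_range_operator_commutes_mod_compacts_general
    {H₁ H₂ : Type*}
    [NormedAddCommGroup H₁] [InnerProductSpace ℂ H₁] [CompleteSpace H₁]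
    [NormedAddCommGroup H₂] [InnerProductSpace ℂ H₂] [CompleteSpace H₂]
    {A : Type*} [NormedRing A] [StarRing A] [NormedAlgebra ℂ A]
    (π : A →⋆ₐ[ℂ] (H₂ →L[ℂ] H₂)) (σ : A →⋆ₐ[ℂ] (H₁ →L[ℂ] H₁))
    (W₁ W₂ : H₁ →L[ℂ] H₂)
    (hW₁ : adjoint W₁ ∘L W₁ = 1) (hW₂ : adjoint W₂ ∘L W₂ = 1)
    (hint₁ : ∀ a : A, IsCompactOperator ⇑(adjoint W₁ ∘L π a ∘L W₁ - σ a))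
    (hint₂ : ∀ a : A, IsCompactOperator ⇑(adjoint W₂ ∘L π a ∘L W₂ - σ a))
    (hcomm₁ : ∀ a : A, IsCompactOperator
      ⇑((W₁ ∘L adjoint W₁) * π a - π a * (W₁ ∘L adjoint W₁)))
    (hcomm₂ : ∀ a : A, IsCompactOperator
      ⇑((W₂ ∘L adjoint W₂) * π a - π a * (W₂ ∘L adjoint W₂))) :
    ∀ a : A, IsCompactOperator
      ⇑((W₁ ∘L adjoint W₂) * π a - π a * (W₁ ∘L adjoint W₂)) := by
  intro a
  have hcompr := (hint₂ a).sub (hint₁ a)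
  rw [← FunLike.coe_sub, sub_sub_sub_cancel_right] at hcompr
  exact isCompactOperator_comp_mul_sub_mul_comp_of_leftInverse hW₁ hW₂ (hcomm₁ a) (hcomm₂ a)
    hcompr

/-- Let `W₁, W₂ : H₁ → H₂` be isometries, `π` a representation of a C*-algebra `A` on
`H₂` and `σ` a representation on `H₁` such that `Wⱼ*π(a)Wⱼ - σ(a)` is compact and
`[WⱼWⱼ*, π(a)]` is compact for all `a` and `j = 1, 2`. Then `[W₁W₂*, π(a)]` is compact
for all `a ∈ A`. -/
theorem mixed_range_operator_commutes_mod_compacts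
    {H₁ H₂ : Type*}
    [NormedAddCommGroup H₁] [InnerProductSpace ℂ H₁] [CompleteSpace H₁]
    [NormedAddCommGroup H₂] [InnerProductSpace ℂ H₂] [CompleteSpace H₂]
    {A : Type*} [NormedRing A] [StarRing A] [CStarRing A] [NormedAlgebra ℂ A]
    [StarModule ℂ A] [CompleteSpace A]
    (π : A →⋆ₐ[ℂ] (H₂ →L[ℂ] H₂)) (σ : A →⋆ₐ[ℂ] (H₁ →L[ℂ] H₁))
    (W₁ W₂ : H₁ →L[ℂ] H₂)
    (hW₁ : adjoint W₁ ∘L W₁ = 1) (hW₂ : adjoint W₂ ∘L W₂ = 1)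
    (hint₁ : ∀ a : A, IsCompactOperator ⇑(adjoint W₁ ∘L π a ∘L W₁ - σ a))
    (hint₂ : ∀ a : A, IsCompactOperator ⇑(adjoint W₂ ∘L π a ∘L W₂ - σ a))
    (hcomm₁ : ∀ a : A, IsCompactOperator
      ⇑((W₁ ∘L adjoint W₁) * π a - π a * (W₁ ∘L adjoint W₁)))
    (hcomm₂ : ∀ a : A, IsCompactOperator
      ⇑((W₂ ∘L adjoint W₂) * π a - π a * (W₂ ∘L adjoint W₂))) :
    ∀ a : A, IsCompactOperator
      ⇑((W₁ ∘L adjoint W₂) * π a - π a * (W₁ ∘L adjoint W₂)) :=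
  mixed_range_operator_commutes_mod_compacts_general π σ W₁ W₂ hW₁ hW₂ hint₁ hint₂ hcomm₁ hcomm₂
end

section
/- Suppose (U_g)_{g∈Γ} is a family of isometries on a Hilbert space K satisfying U_g*U_{g'} = δ_{g,g'}·1 and Σ_g U_gU_g* = 1 (strongly), with the equivariance property U_g ρ_h = ρ_h U_{h⁻¹g} for a unitary representation ρ of Γ. Let E, E' be unitary representations of Γ on K ⊗ H and K ⊗ H' obtained from ρ tensored with given representations, and let V : H' → H be any isometry, c : Z' → [0,1] a cutoff function with Σ_g g·c = 1 and locally finitely many nonzero translates. Then the operator W := Σ_g (U_g ⊗ 1) E_g (1 ⊗ V π'(√c)) E'_{g⁻¹} is a Γ-equivariant isometry: W E'_h = E_h W for all h ∈ Γ, and W*W = 1. -/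
open scoped Classical

open ContinuousLinearMap

open scoped InnerProductSpace

/-!
Let `T_g = U_g E_g V N E'_{g⁻¹}`, so that `W = Σ_g T_g`. Since the `U_g` are isometries with
mutually orthogonal ranges, `⟪W v, W w⟫ = Σ_g ⟪T'_g v, T'_g w⟫` with `T'_g = E_g V N E'_{g⁻¹}`,
and as `E_g` and `V` are isometries this is `Σ_g ⟪v, E'_g N² E'_{g⁻¹} w⟫ = ⟪v, w⟫` by the
cutoff identity. Equivariance holds termwise up to a shift of the index,
`T_g E'_h = E_h T_{h⁻¹g}`, so it survives the summation.
-/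

section OrthogonalIsometries

variable {ι 𝕜 E F : Type*} [RCLike 𝕜]
  [NormedAddCommGroup E] [InnerProductSpace 𝕜 E] [CompleteSpace E]
  [NormedAddCommGroup F] [InnerProductSpace 𝕜 F] [CompleteSpace F]
  {U : ι → E →L[𝕜] F}

theorem inner_map_map_of_adjoint_comp_eq_ite
    (hU : ∀ i j, adjoint (U i) ∘L U j = if i = j then 1 else 0) (i j : ι) (x y : E) :
    ⟪U i x, U j y⟫_𝕜 = if i = j then ⟪x, y⟫_𝕜 else 0 := by
  rw [← adjoint_inner_right, ← comp_apply, hU]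
  split_ifs <;> simp

theorem hasSum_inner_of_adjoint_comp_eq_ite
    (hU : ∀ i j, adjoint (U i) ∘L U j = if i = j then 1 else 0) {x y : ι → E} {a b : F}
    (ha : HasSum (fun i => U i (x i)) a) (hb : HasSum (fun i => U i (y i)) b) :
    HasSum (fun i => ⟪x i, y i⟫_𝕜) ⟪a, b⟫_𝕜 := by
  have hcoeff : ∀ i, ⟪U i (x i), b⟫_𝕜 = ⟪x i, y i⟫_𝕜 := fun i =>
    (hb.mapL (innerSL 𝕜 (U i (x i)))).unique <|
      (hasSum_ite_eq i ⟪x i, y i⟫_𝕜).congr_fun fun j => by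
        rw [innerSL_apply_apply, inner_map_map_of_adjoint_comp_eq_ite hU]
        rcases eq_or_ne i j with rfl | hij
        · simp
        · simp [hij, hij.symm]
  simpa [hcoeff] using (ha.mapL (innerSL 𝕜 b)).star

end OrthogonalIsometries

section Averaging

variable {Γ 𝕜 K K' : Type*} [Group Γ] [RCLike 𝕜]
  [NormedAddCommGroup K] [InnerProductSpace 𝕜 K]
  [NormedAddCommGroup K'] [InnerProductSpace 𝕜 K']

theorem adjoint_comp_self_eq_one_of_adjoint_eq_inv [CompleteSpace K] {E : Γ → K →L[𝕜] K}
    (hE1 : E 1 = 1) (hEmul : ∀ g h, E (g * h) = E g ∘L E h)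
    (hEadj : ∀ g, adjoint (E g) = E g⁻¹) (g : Γ) :
    adjoint (E g) ∘L E g = 1 := by
  rw [hEadj, ← hEmul, inv_mul_cancel, hE1]

def averagedTerm (U E : Γ → K →L[𝕜] K) (E' : Γ → K' →L[𝕜] K') (A : K' →L[𝕜] K) (g : Γ) :
    K' →L[𝕜] K :=
  U g ∘L E g ∘L A ∘L E' g⁻¹

theorem averagedTerm_comp {U E : Γ → K →L[𝕜] K} {E' : Γ → K' →L[𝕜] K'}
    (hEmul : ∀ g h, E (g * h) = E g ∘L E h) (hE'mul : ∀ g h, E' (g * h) = E' g ∘L E' h)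
    (hUequiv : ∀ g h, U g ∘L E h = E h ∘L U (h⁻¹ * g)) (A : K' →L[𝕜] K) (g h : Γ) :
    averagedTerm U E E' A g ∘L E' h = E h ∘L averagedTerm U E E' A (h⁻¹ * g) := by
  have hE : E g = E h ∘L E (h⁻¹ * g) := by rw [← hEmul, mul_inv_cancel_left]
  have hE' : E' g⁻¹ ∘L E' h = E' (h⁻¹ * g)⁻¹ := by rw [← hE'mul, mul_inv_rev, inv_inv]
  simp only [averagedTerm, hE, comp_assoc, hE']
  rw [← comp_assoc, hUequiv, comp_assoc]

end Averaging

theorem averaged_covering_isometry_equivariant_general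
    {Γ : Type*} [Group Γ]
    {K K' : Type*}
    [NormedAddCommGroup K] [InnerProductSpace ℂ K] [CompleteSpace K]
    [NormedAddCommGroup K'] [InnerProductSpace ℂ K'] [CompleteSpace K']
    -- unitary representations E of Γ on K and E' on K'
    (E : Γ → K →L[ℂ] K) (E' : Γ → K' →L[ℂ] K')
    (hE1 : E 1 = 1) (hEmul : ∀ g h : Γ, E (g * h) = E g ∘L E h)
    (hEadj : ∀ g : Γ, adjoint (E g) = E g⁻¹)
    (hE'mul : ∀ g h : Γ, E' (g * h) = E' g ∘L E' h)
    (hE'adj : ∀ g : Γ, adjoint (E' g) = E' g⁻¹)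
    -- the family (U_g) of isometries with orthogonal ranges
    (U : Γ → K →L[ℂ] K)
    (hUorth : ∀ g g' : Γ, adjoint (U g) ∘L U g' = if g = g' then (1 : K →L[ℂ] K) else 0)
    (hUequiv : ∀ g h : Γ, U g ∘L E h = E h ∘L U (h⁻¹ * g))
    -- the isometry V and the cutoff operator N (playing π'(√c))
    (V : K' →L[ℂ] K) (hV : adjoint V ∘L V = 1)
    (N : K' →L[ℂ] K') (hN : IsSelfAdjoint N)
    (hcutoff : ∀ v : K', HasSum (fun g : Γ => E' g (N (N (E' g⁻¹ v)))) v)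
    -- W is the averaged operator Σ_g U_g E_g V N E'_{g⁻¹}
    (W : K' →L[ℂ] K)
    (hW : ∀ v : K', HasSum (fun g : Γ => U g (E g (V (N (E' g⁻¹ v))))) (W v)) :
    adjoint W ∘L W = 1 ∧ ∀ h : Γ, W ∘L E' h = E h ∘L W := by
  have hEiso := adjoint_comp_self_eq_one_of_adjoint_eq_inv hE1 hEmul hEadj
  have hinner (g : Γ) (v w : K') :
      ⟪E g (V (N (E' g⁻¹ v))), E g (V (N (E' g⁻¹ w)))⟫_ℂ = ⟪v, E' g (N (N (E' g⁻¹ w)))⟫_ℂ := by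
    rw [(inner_map_map_iff_adjoint_comp_self _).mpr (hEiso g),
      (inner_map_map_iff_adjoint_comp_self V).mpr hV, ← adjoint_inner_right, hN.adjoint_eq,
      ← adjoint_inner_right, hE'adj, inv_inv]
  refine ⟨(inner_map_map_iff_adjoint_comp_self W).mp fun v w => ?_, fun h => ?_⟩
  · refine (hasSum_inner_of_adjoint_comp_eq_ite hUorth (hW v) (hW w)).unique ?_
    simpa only [hinner, innerSL_apply_apply] using (hcutoff w).mapL (innerSL ℂ v)
  · ext v
    have hshift := (Equiv.mulLeft h⁻¹).hasSum_iff.mpr ((hW v).mapL (E h))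
    refine (hW (E' h v)).unique (hshift.congr_fun fun g => ?_)
    exact congrArg (· v) (averagedTerm_comp hEmul hE'mul hUequiv (V ∘L N) g h)

/-- Averaging construction of an equivariant isometry: let `E, E'` be unitary
representations of a group `Γ` on Hilbert spaces `K, K'`, `(U_g)` a family of isometries
on `K` with mutually orthogonal ranges summing strongly to `1` and satisfying the
equivariance `U_g E_h = E_h U_{h⁻¹g}`, `V : K' → K` an isometry, and `N` a self-adjoint
"square root of a cutoff" with `Σ_g E'_g N² E'_{g⁻¹} = 1` strongly. Then the operator
`W = Σ_g U_g E_g (V N) E'_{g⁻¹}` is a Γ-equivariant isometry: `W*W = 1` and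
`W E'_h = E_h W` for all `h ∈ Γ`. -/
theorem averaged_covering_isometry_equivariant
    {Γ : Type*} [Group Γ]
    {K K' : Type*}
    [NormedAddCommGroup K] [InnerProductSpace ℂ K] [CompleteSpace K]
    [NormedAddCommGroup K'] [InnerProductSpace ℂ K'] [CompleteSpace K']
    -- unitary representations E of Γ on K and E' on K'
    (E : Γ → K →L[ℂ] K) (E' : Γ → K' →L[ℂ] K')
    (hE1 : E 1 = 1) (hEmul : ∀ g h : Γ, E (g * h) = E g ∘L E h)
    (hEadj : ∀ g : Γ, adjoint (E g) = E g⁻¹)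
    (hE'1 : E' 1 = 1) (hE'mul : ∀ g h : Γ, E' (g * h) = E' g ∘L E' h)
    (hE'adj : ∀ g : Γ, adjoint (E' g) = E' g⁻¹)
    -- the family (U_g) of isometries with orthogonal ranges
    (U : Γ → K →L[ℂ] K)
    (hUorth : ∀ g g' : Γ, adjoint (U g) ∘L U g' = if g = g' then (1 : K →L[ℂ] K) else 0)
    (hUsum : ∀ v : K, HasSum (fun g : Γ => U g (adjoint (U g) v)) v)
    (hUequiv : ∀ g h : Γ, U g ∘L E h = E h ∘L U (h⁻¹ * g))
    -- the isometry V and the cutoff operator N (playing π'(√c))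
    (V : K' →L[ℂ] K) (hV : adjoint V ∘L V = 1)
    (N : K' →L[ℂ] K') (hN : IsSelfAdjoint N)
    (hcutoff : ∀ v : K', HasSum (fun g : Γ => E' g (N (N (E' g⁻¹ v)))) v)
    -- W is the averaged operator Σ_g U_g E_g V N E'_{g⁻¹}
    (W : K' →L[ℂ] K)
    (hW : ∀ v : K', HasSum (fun g : Γ => U g (E g (V (N (E' g⁻¹ v))))) (W v)) :
    adjoint W ∘L W = 1 ∧ ∀ h : Γ, W ∘L E' h = E h ∘L W :=
  averaged_covering_isometry_equivariant_general E E' hE1 hEmul hEadj hE'mul hE'adj U hUorth hUequiv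
    V hV N hN hcutoff W hW
end

section
/- With W the averaged isometry of the previous statement, if V has finite propagation R₀ with respect to a coarsely equivariant coarse map f : Z' → Z (with equivariance defect M₁), then W has finite propagation at most R₀ + M₁: for φ ∈ C_c(Z), φ' ∈ C_c(Z') with d(supp φ, f(supp φ')) > R₀ + M₁, one has π^∞(φ) W π'^∞(φ') = 0. -/
/-!
Covariance moves `π φ` and `π' ψ` through `U_g E_g` and `E'_{g⁻¹}`, turning each summand
`π(φ) U_g E_g V_c E'_{g⁻¹} π'(ψ)` into `U_g E_g π(φ ∘ g) V_c π'(ψ ∘ g) E'_{g⁻¹}`.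
Since `g` acts isometrically and `f` is equivariant up to `M₁`, the translated supports are
still more than `R₀` apart, so every summand vanishes, and hence so does the sum.
-/

open ContinuousLinearMap Function
open scoped Classical

theorem comp_comp_eq_zero_of_hasSum {R ι : Type*} [Semiring R]
    {M₁ M₂ M₃ M₄ : Type*} [AddCommMonoid M₁] [AddCommMonoid M₂] [AddCommMonoid M₃]
    [AddCommMonoid M₄] [TopologicalSpace M₁] [TopologicalSpace M₂] [TopologicalSpace M₃]
    [TopologicalSpace M₄] [T2Space M₄] [Module R M₁] [Module R M₂] [Module R M₃] [Module R M₄]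
    {T : ι → M₂ →L[R] M₃} {S : M₂ →L[R] M₃}
    (hS : ∀ v, HasSum (fun i => T i v) (S v)) {A : M₃ →L[R] M₄} {B : M₁ →L[R] M₂}
    (hT : ∀ i, A ∘L T i ∘L B = 0) : A ∘L S ∘L B = 0 := by
  ext v
  have hsum : HasSum (fun i => (A ∘L T i ∘L B) v) (A (S (B v))) := A.hasSum (hS (B v))
  simp only [hT, zero_apply] at hsum
  exact hsum.unique hasSum_zero

section Separation

variable {Γ Z Z' : Type*} [PseudoMetricSpace Z] [SMul Γ Z] [SMul Γ Z'] [IsIsometricSMul Γ Z]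

theorem lt_dist_of_lt_dist_smul {f : Z' → Z} {M R : ℝ}
    (hf : ∀ (g : Γ) (z' : Z'), dist (f (g • z')) (g • f z') ≤ M)
    {g : Γ} {x : Z} {y : Z'} (h : R + M < dist (g • x) (f (g • y))) : R < dist x (f y) := by
  have := dist_triangle (g • x) (g • f y) (f (g • y))
  rw [dist_smul, dist_comm (g • f y)] at this
  linarith [hf g y]

theorem separated_comp_smul {f : Z' → Z} {M R : ℝ}
    (hf : ∀ (g : Γ) (z' : Z'), dist (f (g • z')) (g • f z') ≤ M)
    {A B : Type*} [Zero A] [Zero B] {φ : Z → A} {ψ : Z' → B}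
    (hsep : ∀ x ∈ support φ, ∀ y ∈ support ψ, dist x (f y) > R + M) (g : Γ) :
    ∀ x ∈ support (fun z => φ (g • z)), ∀ y ∈ support (fun z => ψ (g • z)),
      dist x (f y) > R :=
  fun _ hx _ hy => lt_dist_of_lt_dist_smul hf (hsep _ hx _ hy)

end Separation

section Covariance

variable {Γ Z Z' K K' : Type*} [Group Γ] [MulAction Γ Z] [MulAction Γ Z']
    [NormedAddCommGroup K] [NormedSpace ℂ K] [NormedAddCommGroup K'] [NormedSpace ℂ K']

theorem inv_comp_eq_comp_inv {E' : Γ → K' →L[ℂ] K'} {π' : (Z' → ℂ) → (K' →L[ℂ] K')}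
    (hcovπ' : ∀ (g : Γ) (ψ : Z' → ℂ), π' ψ ∘L E' g = E' g ∘L π' (fun z => ψ (g • z)))
    (g : Γ) (ψ : Z' → ℂ) : E' g⁻¹ ∘L π' ψ = π' (fun z => ψ (g • z)) ∘L E' g⁻¹ := by
  have := hcovπ' g⁻¹ fun z => ψ (g • z)
  simp only [smul_inv_smul] at this
  exact this.symm

theorem comp_summand_comp {E : Γ → K →L[ℂ] K} {E' : Γ → K' →L[ℂ] K'}
    {π : (Z → ℂ) → (K →L[ℂ] K)} {π' : (Z' → ℂ) → (K' →L[ℂ] K')} {U : Γ → K →L[ℂ] K}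
    (hcovπ : ∀ (g : Γ) (φ : Z → ℂ), π φ ∘L E g = E g ∘L π (fun z => φ (g • z)))
    (hcovπ' : ∀ (g : Γ) (ψ : Z' → ℂ), π' ψ ∘L E' g = E' g ∘L π' (fun z => ψ (g • z)))
    (hUπ : ∀ (g : Γ) (φ : Z → ℂ), π φ ∘L U g = U g ∘L π φ)
    (Vc : K' →L[ℂ] K) (g : Γ) (φ : Z → ℂ) (ψ : Z' → ℂ) :
    π φ ∘L (U g ∘L E g ∘L Vc ∘L E' g⁻¹) ∘L π' ψ =
      U g ∘L E g ∘L (π (fun z => φ (g • z)) ∘L Vc ∘L π' (fun z => ψ (g • z))) ∘L E' g⁻¹ := by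
  simp only [ContinuousLinearMap.comp_assoc, inv_comp_eq_comp_inv hcovπ']
  rw [← ContinuousLinearMap.comp_assoc, hUπ, ContinuousLinearMap.comp_assoc,
    ← ContinuousLinearMap.comp_assoc (π φ), hcovπ, ContinuousLinearMap.comp_assoc]

end Covariance

theorem averaged_isometry_finite_propagation_general
    {Γ : Type*} [Group Γ]
    {Z Z' : Type*} [MetricSpace Z] [MulAction Γ Z] [MulAction Γ Z']
    {K K' : Type*}
    [NormedAddCommGroup K] [InnerProductSpace ℂ K]
    [NormedAddCommGroup K'] [InnerProductSpace ℂ K']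
    -- the metric of Z is Γ-invariant
    (hisoZ : ∀ (g : Γ) (x y : Z), dist (g • x) (g • y) = dist x y)
    -- f is a coarsely equivariant map with defect M₁
    (f : Z' → Z) (M₁ : ℝ)
    (hfequiv : ∀ (g : Γ) (z' : Z'), dist (f (g • z')) (g • f z') ≤ M₁)
    -- unitary representations E on K and E' on K'
    (E : Γ → K →L[ℂ] K) (E' : Γ → K' →L[ℂ] K')
    -- representations of function algebras, covariant for the actions
    (π : (Z → ℂ) → (K →L[ℂ] K)) (π' : (Z' → ℂ) → (K' →L[ℂ] K'))
    (hcovπ : ∀ (g : Γ) (φ : Z → ℂ),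
      π φ ∘L E g = E g ∘L π (fun z => φ (g • z)))
    (hcovπ' : ∀ (g : Γ) (ψ : Z' → ℂ),
      π' ψ ∘L E' g = E' g ∘L π' (fun z => ψ (g • z)))
    -- the family (U_g), commuting with π
    (U : Γ → K →L[ℂ] K)
    (hUπ : ∀ (g : Γ) (φ : Z → ℂ), π φ ∘L U g = U g ∘L π φ)
    -- the local piece Vc (= V π'(√c)) has propagation ≤ R₀ relative to f
    (Vc : K' →L[ℂ] K) (R₀ : ℝ)
    (hVcProp : ∀ (φ : Z → ℂ) (ψ : Z' → ℂ),
      (∀ x ∈ support φ, ∀ y ∈ support ψ, dist x (f y) > R₀) →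
      π φ ∘L Vc ∘L π' ψ = 0)
    -- W is the averaged operator Σ_g U_g E_g Vc E'_{g⁻¹}
    (W : K' →L[ℂ] K)
    (hW : ∀ v : K', HasSum (fun g : Γ => U g (E g (Vc (E' g⁻¹ v)))) (W v)) :
    -- conclusion: W has propagation at most R₀ + M₁
    ∀ (φ : Z → ℂ) (ψ : Z' → ℂ),
      (∀ x ∈ support φ, ∀ y ∈ support ψ, dist x (f y) > R₀ + M₁) →
      π φ ∘L W ∘L π' ψ = 0 := by
  intro φ ψ hsep
  have : IsIsometricSMul Γ Z := ⟨fun g => Isometry.of_dist_eq (hisoZ g)⟩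
  refine comp_comp_eq_zero_of_hasSum (T := fun g => U g ∘L E g ∘L Vc ∘L E' g⁻¹) hW fun g => ?_
  rw [comp_summand_comp hcovπ hcovπ' hUπ, hVcProp _ _ (separated_comp_smul hfequiv hsep g),
    zero_comp, comp_zero, comp_zero]

/-- Finite propagation of the averaged covering isometry: in the averaging construction
`W = Σ_g U_g E_g V_c E'_{g⁻¹}` over a coarsely equivariant coarse map `f : Z' → Z` (with
equivariance defect `M₁` and Γ-invariant metric on `Z`), if the local piece `V_c` has
propagation `≤ R₀` relative to `f`, then `W` has propagation at most `R₀ + M₁`: for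
functions `φ, ψ` with `dist (supp φ) (f (supp ψ)) > R₀ + M₁` one has
`π(φ) W π'(ψ) = 0`. -/
theorem averaged_isometry_finite_propagation
    {Γ : Type*} [Group Γ]
    {Z Z' : Type*} [MetricSpace Z] [MetricSpace Z'] [MulAction Γ Z] [MulAction Γ Z']
    {K K' : Type*}
    [NormedAddCommGroup K] [InnerProductSpace ℂ K] [CompleteSpace K]
    [NormedAddCommGroup K'] [InnerProductSpace ℂ K'] [CompleteSpace K']
    -- the metric of Z is Γ-invariant
    (hisoZ : ∀ (g : Γ) (x y : Z), dist (g • x) (g • y) = dist x y)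
    -- f is a coarsely equivariant map with defect M₁
    (f : Z' → Z) (M₁ : ℝ) (hM₁ : 0 ≤ M₁)
    (hfequiv : ∀ (g : Γ) (z' : Z'), dist (f (g • z')) (g • f z') ≤ M₁)
    -- unitary representations E on K and E' on K'
    (E : Γ → K →L[ℂ] K) (E' : Γ → K' →L[ℂ] K')
    (hE1 : E 1 = 1) (hEmul : ∀ g h : Γ, E (g * h) = E g ∘L E h)
    (hEadj : ∀ g : Γ, adjoint (E g) = E g⁻¹)
    (hE'1 : E' 1 = 1) (hE'mul : ∀ g h : Γ, E' (g * h) = E' g ∘L E' h)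
    (hE'adj : ∀ g : Γ, adjoint (E' g) = E' g⁻¹)
    -- representations of function algebras, covariant for the actions
    (π : (Z → ℂ) → (K →L[ℂ] K)) (π' : (Z' → ℂ) → (K' →L[ℂ] K'))
    (hcovπ : ∀ (g : Γ) (φ : Z → ℂ),
      π φ ∘L E g = E g ∘L π (fun z => φ (g • z)))
    (hcovπ' : ∀ (g : Γ) (ψ : Z' → ℂ),
      π' ψ ∘L E' g = E' g ∘L π' (fun z => ψ (g • z)))
    -- the family (U_g), commuting with π
    (U : Γ → K →L[ℂ] K)
    (hUorth : ∀ g g' : Γ,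
      adjoint (U g) ∘L U g' = if g = g' then (1 : K →L[ℂ] K) else 0)
    (hUsum : ∀ v : K, HasSum (fun g : Γ => U g (adjoint (U g) v)) v)
    (hUequiv : ∀ g h : Γ, U g ∘L E h = E h ∘L U (h⁻¹ * g))
    (hUπ : ∀ (g : Γ) (φ : Z → ℂ), π φ ∘L U g = U g ∘L π φ)
    -- the local piece Vc (= V π'(√c)) has propagation ≤ R₀ relative to f
    (Vc : K' →L[ℂ] K) (R₀ : ℝ) (hR₀ : 0 ≤ R₀)
    (hVcProp : ∀ (φ : Z → ℂ) (ψ : Z' → ℂ),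
      (∀ x ∈ support φ, ∀ y ∈ support ψ, dist x (f y) > R₀) →
      π φ ∘L Vc ∘L π' ψ = 0)
    -- W is the averaged operator Σ_g U_g E_g Vc E'_{g⁻¹}
    (W : K' →L[ℂ] K)
    (hW : ∀ v : K', HasSum (fun g : Γ => U g (E g (Vc (E' g⁻¹ v)))) (W v)) :
    -- conclusion: W has propagation at most R₀ + M₁
    ∀ (φ : Z → ℂ) (ψ : Z' → ℂ),
      (∀ x ∈ support φ, ∀ y ∈ support ψ, dist x (f y) > R₀ + M₁) →
      π φ ∘L W ∘L π' ψ = 0 :=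
  averaged_isometry_finite_propagation_general hisoZ f M₁ hfequiv E E' π π' hcovπ hcovπ' U hUπ Vc R₀
    hVcProp W hW
end
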